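/- arXiv:1806.06873 — 2 statements merged into one kernel-verified Lean document; each statement's English description precedes it below -/
import Mathlib

section
/- Let C be a k-linear category with finite biproducts. If f : X ⟶ X and g : Y ⟶ Y are endomorphisms in C, then [f ⊕ g] = [f] + [g] in Tr(C), where f ⊕ g : X ⊕ Y ⟶ X ⊕ Y denotes the biproduct morphism biprod.map f g. -/
open CategoryTheory CategoryTheory.Limits DirectSum

attribute [local instance] CategoryTheory.Limits.hasBinaryBiproducts_of_finite_biproducts

variable (k : Type*) [CommRing k]
variable (C : Type*) [Category C] [Preadditive C] [CategoryTheory.Linear k C]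

/-- The submodule of `⨁ X, End X` spanned by the commutators `f ≫ g - g ≫ f`,
for all pairs of morphisms `f : X ⟶ Y` and `g : Y ⟶ X`. -/
def traceRelations : Submodule k (⨁ X : C, (X ⟶ X)) :=
  letI : DecidableEq C := Classical.decEq C
  Submodule.span k
    { m | ∃ (X Y : C) (f : X ⟶ Y) (g : Y ⟶ X),
        m = DirectSum.of (fun Z : C => Z ⟶ Z) X (f ≫ g) -
            DirectSum.of (fun Z : C => Z ⟶ Z) Y (g ≫ f) }

/-- The trace (zeroth Hochschild homology) of a `k`-linear category `C`:
the quotient of `⨁ X, End X` by the span of all commutators `f ≫ g - g ≫ f`. -/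
abbrev CatTrace := (⨁ X : C, (X ⟶ X)) ⧸ traceRelations k C

/-- The class `[f]` in `Tr(C)` of an endomorphism `f : X ⟶ X`. -/
noncomputable def traceClass {X : C} (f : X ⟶ X) : CatTrace k C :=
  letI : DecidableEq C := Classical.decEq C
  Submodule.Quotient.mk (DirectSum.of (fun Z : C => Z ⟶ Z) X f)

variable {k C}

theorem traceClass_comp_comm {X Y : C} (f : X ⟶ Y) (g : Y ⟶ X) :
    traceClass k C (f ≫ g) = traceClass k C (g ≫ f) := by
  classical
  exact (Submodule.Quotient.eq _).2 (Submodule.subset_span ⟨X, Y, f, g, rfl⟩)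

theorem traceClass_add {X : C} (f g : X ⟶ X) :
    traceClass k C (f + g) = traceClass k C f + traceClass k C g := by
  simp only [traceClass, map_add, Submodule.Quotient.mk_add]

theorem traceClass_biprod_eq_add {X Y : C} [HasBinaryBiproduct X Y] (h : X ⊞ Y ⟶ X ⊞ Y) :
    traceClass k C h = traceClass k C (biprod.inl ≫ h ≫ biprod.fst) +
      traceClass k C (biprod.inr ≫ h ≫ biprod.snd) := by
  conv_lhs => rw [← Category.id_comp h, ← biprod.total, Preadditive.add_comp]
  rw [traceClass_add, Category.assoc, Category.assoc, traceClass_comp_comm biprod.fst,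
    traceClass_comp_comm biprod.snd, Category.assoc, Category.assoc]

variable (k C)

/-- Let `C` be a `k`-linear category with finite biproducts.  If `f : X ⟶ X` and
`g : Y ⟶ Y` are endomorphisms in `C`, then `[f ⊕ g] = [f] + [g]` in `Tr(C)`. -/
theorem traceClass_biprod_map [HasFiniteBiproducts C] {X Y : C}
    (f : X ⟶ X) (g : Y ⟶ Y) :
    traceClass k C (biprod.map f g) = traceClass k C f + traceClass k C g := by
  rw [traceClass_biprod_eq_add, biprod.inl_map_assoc, biprod.inl_fst,
    biprod.inr_map_assoc, biprod.inr_snd, Category.comp_id, Category.comp_id]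
end

section
/- Let k be a field and let Vect_k be the category of finite-dimensional k-vector spaces. The assignment [f] ↦ tr(f) (the usual trace of a linear endomorphism f) induces a well-defined isomorphism of k-modules Tr(Vect_k) → k. -/
open CategoryTheory CategoryTheory.Limits DirectSum

variable (k : Type*) [CommRing k]
variable (C : Type*) [Category C] [Preadditive C] [CategoryTheory.Linear k C]

/-!
The trace of linear maps is cyclic, so it descends to a map `Tr(Vect_k) → k`. An inverse is
`c ↦ c • [𝟙 L]` for a line `L`: a basis of `V` factors `𝟙 V = ∑ pᵢ ≫ qᵢ` through `L`, so cyclicity gives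
`[f] = ∑ [qᵢ ≫ f ≫ pᵢ]`, and every endomorphism of `L` is its trace times `𝟙 L`, whence
`[f] = tr f • [𝟙 L]`.
-/

variable {C}

namespace CatTrace

noncomputable def traceClassₗ (X : C) : (X ⟶ X) →ₗ[k] CatTrace k C :=
  letI : DecidableEq C := Classical.decEq C
  (traceRelations k C).mkQ ∘ₗ DirectSum.lof k C (fun Z : C => Z ⟶ Z) X

theorem traceClass_smul (c : k) {X : C} (f : X ⟶ X) :
    traceClass k C (c • f) = c • traceClass k C f :=
  map_smul (traceClassₗ k X) c f

theorem traceClass_sum {ι : Type*} (s : Finset ι) {X : C} (f : ι → (X ⟶ X)) :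
    traceClass k C (∑ i ∈ s, f i) = ∑ i ∈ s, traceClass k C (f i) :=
  map_sum (traceClassₗ k X) f s

theorem traceClass_comp_comm {X Y : C} (f : X ⟶ Y) (g : Y ⟶ X) :
    traceClass k C (f ≫ g) = traceClass k C (g ≫ f) := by
  rw [traceClass, traceClass, Submodule.Quotient.eq]
  exact Submodule.subset_span ⟨X, Y, f, g, rfl⟩

theorem traceClass_eq_sum_of_sum_eq_id {X : C} {ι : Type*} (s : Finset ι) {Y : ι → C}
    (p : ∀ i, X ⟶ Y i) (q : ∀ i, Y i ⟶ X) (hpq : ∑ i ∈ s, p i ≫ q i = 𝟙 X) (f : X ⟶ X) :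
    traceClass k C f = ∑ i ∈ s, traceClass k C (q i ≫ f ≫ p i) :=
  calc traceClass k C f = traceClass k C (∑ i ∈ s, p i ≫ q i ≫ f) := by
        simp only [← Category.assoc, ← Preadditive.sum_comp, hpq, Category.id_comp]
    _ = ∑ i ∈ s, traceClass k C (q i ≫ f ≫ p i) := by
        rw [traceClass_sum]
        exact Finset.sum_congr rfl fun i _ => by rw [traceClass_comp_comm, Category.assoc]

variable {k}
variable {M : Type*} [AddCommGroup M] [Module k M]

theorem linearMap_ext {φ ψ : CatTrace k C →ₗ[k] M}
    (h : ∀ (X : C) (f : X ⟶ X), φ (traceClass k C f) = ψ (traceClass k C f)) : φ = ψ :=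
  letI : DecidableEq C := Classical.decEq C
  Submodule.linearMap_qext _ (DirectSum.linearMap_ext k fun X => LinearMap.ext (h X))

noncomputable def lift (τ : ∀ X : C, (X ⟶ X) →ₗ[k] M)
    (hτ : ∀ (X Y : C) (f : X ⟶ Y) (g : Y ⟶ X), τ X (f ≫ g) = τ Y (g ≫ f)) :
    CatTrace k C →ₗ[k] M :=
  letI : DecidableEq C := Classical.decEq C
  (traceRelations k C).liftQ (DirectSum.toModule k C M τ) <| by
    refine Submodule.span_le.mpr ?_
    rintro _ ⟨X, Y, f, g, rfl⟩
    simp [← DirectSum.lof_eq_of k, hτ X Y f g]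

@[simp]
theorem lift_traceClass (τ : ∀ X : C, (X ⟶ X) →ₗ[k] M)
    (hτ : ∀ (X Y : C) (f : X ⟶ Y) (g : Y ⟶ X), τ X (f ≫ g) = τ Y (g ≫ f)) {X : C} (f : X ⟶ X) :
    lift τ hτ (traceClass k C f) = τ X f :=
  letI : DecidableEq C := Classical.decEq C
  (Submodule.liftQ_apply _ _ _).trans (DirectSum.toModule_lof (M := fun Z : C => Z ⟶ Z) k X f)

end CatTrace

theorem LinearMap.eq_trace_smul_id_of_finrank_eq_one {R M : Type*} [CommRing R] [Nontrivial R]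
    [AddCommGroup M] [Module R M] [Module.Free R M] [Module.Finite R M]
    (d1 : Module.finrank R M = 1) (u : M →ₗ[R] M) : u = LinearMap.trace R M u • LinearMap.id := by
  obtain ⟨c, rfl, -⟩ := u.existsUnique_eq_smul_id_of_finrank_eq_one d1
  simp [d1]

namespace FGModuleCat

open CatTrace

theorem sum_coord_comp_toSpanSingleton_eq_id {R : Type*} [CommRing R] {V L : FGModuleCat R}
    {ι : Type*} [Fintype ι] (b : Module.Basis ι R V) (e : R ≃ₗ[R] L) :
    ∑ i, ofHom (e.toLinearMap ∘ₗ b.coord i) ≫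
      ofHom (LinearMap.toSpanSingleton R V (b i) ∘ₗ e.symm.toLinearMap) = 𝟙 V := by
  apply (ModuleCat.isFG R).ι.map_injective
  rw [Functor.map_sum, CategoryTheory.Functor.map_id]
  ext x
  simp only [ModuleCat.hom_sum, LinearMap.sum_apply, ModuleCat.hom_id, LinearMap.id_apply]
  refine (Finset.sum_congr rfl fun i _ => ?_).trans (b.sum_repr x)
  show e.symm (e (b.coord i x)) • b i = b.repr x i • b i
  rw [e.symm_apply_apply, b.coord_apply]

variable {k : Type*} [Field k]

theorem eq_trace_smul_id_of_finrank_eq_one {L : FGModuleCat k} (d1 : Module.finrank k L = 1)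
    (u : L ⟶ L) : u = LinearMap.trace k L u.hom.hom • 𝟙 L :=
  hom_ext (u.hom.hom.eq_trace_smul_id_of_finrank_eq_one d1)

noncomputable def endTrace (V : FGModuleCat k) : (V ⟶ V) →ₗ[k] k where
  toFun f := LinearMap.trace k V f.hom.hom
  map_add' f g := map_add (LinearMap.trace k V) f.hom.hom g.hom.hom
  map_smul' c f := map_smul (LinearMap.trace k V) c f.hom.hom

variable (k) in
noncomputable def catTraceToField : CatTrace k (FGModuleCat k) →ₗ[k] k :=
  CatTrace.lift endTrace fun _ _ f g => LinearMap.trace_comp_comm' f.hom.hom g.hom.hom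

@[simp]
theorem catTraceToField_traceClass {V : FGModuleCat k} (f : V ⟶ V) :
    catTraceToField k (traceClass k _ f) = LinearMap.trace k V f.hom.hom :=
  lift_traceClass _ _ f

theorem traceClass_eq_trace_smul_traceClass_id {L V : FGModuleCat k} (e : k ≃ₗ[k] L)
    (f : V ⟶ V) : traceClass k _ f = LinearMap.trace k V f.hom.hom • traceClass k _ (𝟙 L) := by
  have hL : Module.finrank k L = 1 := e.finrank_eq.symm.trans (Module.finrank_self k)
  have hdecomp := traceClass_eq_sum_of_sum_eq_id k Finset.univ _ _
    (sum_coord_comp_toSpanSingleton_eq_id (Module.finBasis k V) e) f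
  have htrace := congrArg (catTraceToField k) hdecomp
  simp only [map_sum, catTraceToField_traceClass] at htrace
  rw [htrace, hdecomp, Finset.sum_smul]
  refine Finset.sum_congr rfl fun i _ => ?_
  conv_lhs => rw [eq_trace_smul_id_of_finrank_eq_one hL (_ ≫ f ≫ _)]
  rw [traceClass_smul]

variable (k) in
noncomputable def catTraceEquiv {L : FGModuleCat k} (e : k ≃ₗ[k] L) :
    CatTrace k (FGModuleCat k) ≃ₗ[k] k :=
  .ofLinearMap (catTraceToField k) (LinearMap.toSpanSingleton k _ (traceClass k _ (𝟙 L)))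
    (by ext; simp [← e.finrank_eq])
    (CatTrace.linearMap_ext fun V f => by simp [← traceClass_eq_trace_smul_traceClass_id e])

theorem catTraceEquiv_traceClass {L : FGModuleCat k} (e : k ≃ₗ[k] L) {V : FGModuleCat k}
    (f : V ⟶ V) : catTraceEquiv k e (traceClass k _ f) = LinearMap.trace k V f.hom.hom :=
  catTraceToField_traceClass f

end FGModuleCat

/-- Let `k` be a field and `Vect_k` the category of finite-dimensional `k`-vector
spaces.  The assignment `[f] ↦ tr(f)` (the usual trace of a linear endomorphism)
induces a well-defined isomorphism of `k`-modules `Tr(Vect_k) ≃ k`. -/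
theorem catTrace_FGModuleCat_iso (k : Type) [Field k] :
    ∃ φ : CatTrace k (FGModuleCat k) ≃ₗ[k] k,
      ∀ (V : FGModuleCat k) (f : V ⟶ V),
        φ (traceClass k (FGModuleCat k) f) = LinearMap.trace k V f.hom.hom :=
  ⟨FGModuleCat.catTraceEquiv k (L := FGModuleCat.of k (ULift k)) ULift.moduleEquiv.symm,
    fun _ => FGModuleCat.catTraceEquiv_traceClass _⟩
end
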